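/- arXiv:1302.5436 — 3 statements merged into one kernel-verified Lean document; each statement's English description precedes it below -/
import Mathlib

section
/- For all integers m, n ≥ 2, the function f_{m,n}(p) = 1 − (1 − p^n)^m has exactly one fixed point in the open interval (0,1); that is, there exists a unique p ∈ (0,1) with 1 − (1 − p^n)^m = p. -/
/-!
Let `g p = f(p) - p` with `f = f_{m,n}`. Both `0` and `1` are zeros of `g`, and `g'(0) = g'(1) = -1`
because `n ≥ 2` and `m ≥ 2`; so `g` is negative just right of `0`, positive just left of `1`, and
vanishes somewhere in between. At an interior zero `r`, two Bernoulli inequalities give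
`f'(r) > 1`, so `g` crosses zero upward at each of its zeros, and a continuous function that does
this has at most one zero on an interval.
-/

open Set Filter Topology SignType Function

section CrossingZeros

variable {g : ℝ → ℝ} {x₀ : ℝ}

lemma eventually_nhdsGT_pos_of_deriv_pos (hd : 0 < deriv g x₀) (h₀ : g x₀ = 0) :
    ∀ᶠ x in 𝓝[>] x₀, 0 < g x := by
  filter_upwards [nhdsWithin_le_nhds (eventually_nhdsWithin_sign_eq_of_deriv_pos hd h₀),
    self_mem_nhdsWithin] with x hsign hx
  rwa [sign_pos (sub_pos.2 hx), sign_eq_one_iff] at hsign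

lemma eventually_nhdsLT_neg_of_deriv_pos (hd : 0 < deriv g x₀) (h₀ : g x₀ = 0) :
    ∀ᶠ x in 𝓝[<] x₀, g x < 0 := by
  filter_upwards [nhdsWithin_le_nhds (eventually_nhdsWithin_sign_eq_of_deriv_pos hd h₀),
    self_mem_nhdsWithin] with x hsign hx
  rwa [sign_neg (sub_neg.2 hx), sign_eq_neg_one_iff] at hsign

lemma eventually_nhdsGT_neg_of_deriv_neg (hd : deriv g x₀ < 0) (h₀ : g x₀ = 0) :
    ∀ᶠ x in 𝓝[>] x₀, g x < 0 := by
  filter_upwards [nhdsWithin_le_nhds (eventually_nhdsWithin_sign_eq_of_deriv_neg hd h₀),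
    self_mem_nhdsWithin] with x hsign hx
  rwa [sign_neg (sub_neg.2 hx), sign_eq_neg_one_iff] at hsign

lemma eventually_nhdsLT_pos_of_deriv_neg (hd : deriv g x₀ < 0) (h₀ : g x₀ = 0) :
    ∀ᶠ x in 𝓝[<] x₀, 0 < g x := by
  filter_upwards [nhdsWithin_le_nhds (eventually_nhdsWithin_sign_eq_of_deriv_neg hd h₀),
    self_mem_nhdsWithin] with x hsign hx
  rwa [sign_pos (sub_pos.2 hx), sign_eq_one_iff] at hsign

theorem exists_mem_Ioo_eq_zero_of_deriv_neg {a b : ℝ} (hab : a < b)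
    (hg : ContinuousOn g (Icc a b)) (ha : g a = 0) (hb : g b = 0) (hda : deriv g a < 0)
    (hdb : deriv g b < 0) :
    ∃ x ∈ Ioo a b, g x = 0 := by
  obtain ⟨c, hgc, hac, hcb⟩ :=
    ((eventually_nhdsGT_neg_of_deriv_neg hda ha).and (Ioo_mem_nhdsGT hab)).exists
  obtain ⟨d, hgd, hcd, hdb'⟩ :=
    ((eventually_nhdsLT_pos_of_deriv_neg hdb hb).and (Ioo_mem_nhdsLT hcb)).exists
  obtain ⟨x, ⟨hcx, hxd⟩, hgx⟩ :=
    intermediate_value_Ioo hcd.le (hg.mono (Icc_subset_Icc hac.le hdb'.le)) ⟨hgc, hgd⟩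
  exact ⟨x, ⟨hac.trans hcx, hxd.trans hdb'⟩, hgx⟩

/-- Between two zeros `p < q` take the largest zero `r` below a point `c < q` where `g c < 0`;
just to the right of `r` the function is positive, so it has another zero in `(r, c)`. -/
theorem Set.OrdConnected.subsingleton_zeros_of_deriv_pos {s : Set ℝ} (hs : s.OrdConnected)
    (hg : ContinuousOn g s) (hd : ∀ x ∈ s, g x = 0 → 0 < deriv g x) :
    (s ∩ g ⁻¹' {0}).Subsingleton := by
  suffices key : ∀ p ∈ s ∩ g ⁻¹' {0}, ∀ q ∈ s ∩ g ⁻¹' {0}, ¬ p < q from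
    fun p hp q hq => le_antisymm (not_lt.1 (key q hq p hp)) (not_lt.1 (key p hp q hq))
  rintro p ⟨hps, hp⟩ q ⟨hqs, hq⟩ hpq
  obtain ⟨c, hgc, hpc, hcq⟩ :=
    ((eventually_nhdsLT_neg_of_deriv_pos (hd q hqs hq) hq).and (Ioo_mem_nhdsLT hpq)).exists
  have hsub : Icc p c ⊆ s := (Icc_subset_Icc_right hcq.le).trans (hs.out hps hqs)
  have hclosed : IsClosed (Icc p c ∩ g ⁻¹' {0}) :=
    (hg.mono hsub).preimage_isClosed_of_isClosed isClosed_Icc isClosed_singleton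
  obtain ⟨r, ⟨⟨hpr, hrc⟩, hr⟩, hmax⟩ :=
    (isCompact_Icc.of_isClosed_subset hclosed inter_subset_left).exists_isGreatest
      ⟨p, ⟨le_rfl, hpc.le⟩, hp⟩
  have hrc : r < c := hrc.lt_of_ne (by rintro rfl; exact hgc.ne hr)
  obtain ⟨y, hgy, hry, hyc⟩ :=
    ((eventually_nhdsGT_pos_of_deriv_pos (hd r (hsub ⟨hpr, hrc.le⟩) hr) hr).and
      (Ioo_mem_nhdsGT hrc)).exists
  obtain ⟨z, ⟨hyz, hzc⟩, hgz⟩ :=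
    intermediate_value_Ioo' hyc.le (hg.mono ((Icc_subset_Icc_left (hpr.trans hry.le)).trans hsub))
      ⟨hgc, hgy⟩
  exact (hry.trans hyz).not_ge (hmax ⟨⟨hpr.trans (hry.trans hyz).le, hzc.le⟩, hgz⟩)

end CrossingZeros

def diamondMap (m n : ℕ) (p : ℝ) : ℝ := 1 - (1 - p ^ n) ^ m

lemma continuous_diamondMap (m n : ℕ) : Continuous (diamondMap m n) := by
  unfold diamondMap; fun_prop

lemma hasDerivAt_diamondMap (m n : ℕ) (r : ℝ) :
    HasDerivAt (diamondMap m n) (m * n * r ^ (n - 1) * (1 - r ^ n) ^ (m - 1)) r :=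
  ((((hasDerivAt_pow n r).const_sub 1).pow m).const_sub 1).congr_deriv (by ring)

/-- At a fixed point `r`, strict Bernoulli `1 - m rⁿ < (1 - rⁿ)ᵐ = 1 - r` gives `r < m rⁿ`, and
Bernoulli `1 - rⁿ ≤ n (1 - r)` then bounds `f'(r) (1 - rⁿ) = m n rⁿ⁻¹ (1 - r)` from below. -/
lemma one_lt_deriv_diamondMap_of_isFixedPt {m n : ℕ} (hm : 2 ≤ m) {r : ℝ} (hr : r ∈ Ioo 0 1)
    (hfix : IsFixedPt (diamondMap m n) r) : 1 < deriv (diamondMap m n) r := by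
  rw [(hasDerivAt_diamondMap m n r).deriv]
  obtain ⟨hr0, hr1⟩ := hr
  have hfix : (1 - r ^ n) ^ m = 1 - r := by unfold IsFixedPt diamondMap at hfix; linarith
  obtain rfl | hn := eq_or_ne n 0
  · simp [zero_pow (by omega : m ≠ 0)] at hfix; linarith
  have hrn : 0 < r ^ n := pow_pos hr0 n
  have hrn1 : r ^ n < 1 := pow_lt_one₀ hr0.le hr1 hn
  have hbern : r < m * r ^ n := by
    have := one_add_mul_self_lt_rpow_one_add (s := -r ^ n) (by linarith) (by simpa using hrn.ne')
      (p := m) (by exact_mod_cast hm)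
    rw [Real.rpow_natCast, ← sub_eq_add_neg, hfix] at this
    linarith
  have hbern' : 1 - r ^ n ≤ n * (1 - r) := by
    have := one_add_mul_sub_le_pow (by linarith : -1 ≤ r) n
    linarith
  have hpow : (1 - r ^ n) ^ (m - 1) * (1 - r ^ n) = 1 - r := by
    rw [← pow_succ, Nat.sub_add_cancel (by omega), hfix]
  have hmul : r ^ (n - 1) * r = r ^ n := pow_sub_one_mul hn r
  have key : (1 - r ^ n) * r < m * n * r ^ (n - 1) * (1 - r ^ n) ^ (m - 1) * ((1 - r ^ n) * r) :=
    calc (1 - r ^ n) * r ≤ n * (1 - r) * r := by gcongr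
      _ < n * (1 - r) * (m * r ^ n) := by gcongr
      _ = m * n * (r ^ (n - 1) * r) * ((1 - r ^ n) ^ (m - 1) * (1 - r ^ n)) := by
        rw [hmul, hpow]; ring
      _ = _ := by ring
  exact (lt_mul_iff_one_lt_left (mul_pos (by linarith) hr0)).1 key

/-- For all integers `m, n ≥ 2`, the function `f_{m,n}(p) = 1 − (1 − p^n)^m` has exactly one
fixed point in the open interval `(0,1)`. -/
theorem diamond_unique_interior_fixed_point (m n : ℕ) (hm : 2 ≤ m) (hn : 2 ≤ n) :
    ∃! p : ℝ, p ∈ Set.Ioo (0 : ℝ) 1 ∧ 1 - (1 - p ^ n) ^ m = p := by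
  set g : ℝ → ℝ := fun p => diamondMap m n p - p
  have hg : Continuous g := (continuous_diamondMap m n).sub continuous_id
  have hdg (r : ℝ) : deriv g r = deriv (diamondMap m n) r - 1 := by
    rw [((hasDerivAt_diamondMap m n r).fun_sub (hasDerivAt_id' r)).deriv,
      (hasDerivAt_diamondMap m n r).deriv]
  have hg0 : g 0 = 0 := by simp [g, diamondMap, zero_pow (by omega : n ≠ 0)]
  have hg1 : g 1 = 0 := by simp [g, diamondMap, zero_pow (by omega : m ≠ 0)]
  have hdg0 : deriv g 0 < 0 := by
    simp [hdg, (hasDerivAt_diamondMap m n 0).deriv, zero_pow (by omega : n - 1 ≠ 0)]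
  have hdg1 : deriv g 1 < 0 := by
    simp [hdg, (hasDerivAt_diamondMap m n 1).deriv, zero_pow (by omega : m - 1 ≠ 0)]
  obtain ⟨p, hp, hgp⟩ :=
    exists_mem_Ioo_eq_zero_of_deriv_neg zero_lt_one hg.continuousOn hg0 hg1 hdg0 hdg1
  refine ⟨p, ⟨hp, sub_eq_zero.1 hgp⟩, fun q ⟨hq, hfq⟩ => ?_⟩
  refine ordConnected_Ioo.subsingleton_zeros_of_deriv_pos hg.continuousOn (fun r hr hgr => ?_)
    ⟨hq, sub_eq_zero.2 hfq⟩ ⟨hp, hgp⟩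
  rw [hdg, sub_pos]
  exact one_lt_deriv_diamondMap_of_isFixedPt hm hr (sub_eq_zero.1 hgr)
end

section
/- For all integers m, n ≥ 2, if p_c ∈ (0,1) is a fixed point of f_{m,n}(p) = 1 − (1 − p^n)^m, then the derivative of f_{m,n} at p_c, which equals m·n·p_c^{n−1}·(1 − p_c^n)^{m−1}, is strictly greater than 1; that is, the interior fixed point of f_{m,n} is repelling. -/
/-!
Write `q = p^n`. At a fixed point `(1 - q)^m = 1 - p`, so the derivative `D` satisfies
`D · p(1 - q) = (m q) · (n (1 - p))`. The strict Bernoulli inequality, applied once to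
`(1 - q)^m` and once to `(1 - (1 - p))^n`, gives `p < m q` and `1 - q < n (1 - p)`;
multiplying these yields `p(1 - q) < D · p(1 - q)`, i.e. `1 < D`.
-/

open Set Function

def diamondCrossingProb (m n : ℕ) (p : ℝ) : ℝ := 1 - (1 - p ^ n) ^ m

theorem one_add_mul_lt_pow {a : ℝ} (ha : -1 ≤ a) (ha0 : a ≠ 0) {k : ℕ} (hk : 2 ≤ k) :
    1 + k * a < (1 + a) ^ k := by
  have hk1 : (1 : ℝ) < k := by exact_mod_cast hk
  simpa [mul_comm, Real.rpow_natCast] using one_add_mul_self_lt_rpow_one_add ha ha0 hk1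

theorem hasDerivAt_diamondCrossingProb (m n : ℕ) (p : ℝ) :
    HasDerivAt (diamondCrossingProb m n) (m * n * p ^ (n - 1) * (1 - p ^ n) ^ (m - 1)) p := by
  have h := (((hasDerivAt_pow n p).const_sub 1).pow m).const_sub 1
  exact h.congr_deriv (by ring)

theorem one_lt_deriv_diamondCrossingProb_of_isFixedPt {m n : ℕ} (hm : 2 ≤ m) (hn : 2 ≤ n)
    {p : ℝ} (hp : p ∈ Ioo 0 1) (hfix : IsFixedPt (diamondCrossingProb m n) p) :
    1 < m * n * p ^ (n - 1) * (1 - p ^ n) ^ (m - 1) := by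
  obtain ⟨hp0, hp1⟩ := hp
  set q := p ^ n with hq_def
  have hq0 : 0 < q := pow_pos hp0 n
  have hq1 : q < 1 := pow_lt_one₀ hp0.le hp1 (by omega)
  have hfix' : (1 - q) ^ m = 1 - p := by unfold IsFixedPt diamondCrossingProb at hfix; linarith
  have hp_lt : p < m * q := by
    have := one_add_mul_lt_pow (a := -q) (by linarith) (by linarith) hm
    rw [← sub_eq_add_neg, hfix'] at this
    linarith
  have hq_lt : 1 - q < n * (1 - p) := by
    have := one_add_mul_lt_pow (a := -(1 - p)) (by linarith) (by linarith) hn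
    rw [show 1 + -(1 - p) = p by ring] at this
    linarith
  have hfactor : m * n * p ^ (n - 1) * (1 - q) ^ (m - 1) * (p * (1 - q))
      = (m * q) * (n * (1 - p)) := by
    rw [← hfix', ← pow_sub_one_mul (by omega : m ≠ 0) (1 - q), hq_def,
      ← pow_sub_one_mul (by omega : n ≠ 0) p]
    ring
  have hpos : 0 < p * (1 - q) := mul_pos hp0 (by linarith)
  refine lt_of_mul_lt_mul_right ?_ hpos.le
  calc 1 * (p * (1 - q)) = p * (1 - q) := one_mul _
    _ < (m * q) * (n * (1 - p)) := mul_lt_mul'' hp_lt hq_lt hp0.le (by linarith)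
    _ = _ := hfactor.symm

/-- For all integers `m, n ≥ 2`, if `p_c ∈ (0,1)` is a fixed point of
`f_{m,n}(p) = 1 − (1 − p^n)^m`, then the derivative of `f_{m,n}` at `p_c`, which equals
`m·n·p_c^{n−1}·(1 − p_c^n)^{m−1}`, is strictly greater than `1`: the interior fixed point
is repelling. -/
theorem diamond_interior_fixed_point_repelling (m n : ℕ) (hm : 2 ≤ m) (hn : 2 ≤ n)
    (p_c : ℝ) (hpc : p_c ∈ Set.Ioo (0 : ℝ) 1) (hfix : 1 - (1 - p_c ^ n) ^ m = p_c) :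
    deriv (fun p : ℝ => 1 - (1 - p ^ n) ^ m) p_c
      = (m : ℝ) * n * p_c ^ (n - 1) * (1 - p_c ^ n) ^ (m - 1) ∧
    1 < (m : ℝ) * n * p_c ^ (n - 1) * (1 - p_c ^ n) ^ (m - 1) :=
  ⟨(hasDerivAt_diamondCrossingProb m n p_c).deriv,
    one_lt_deriv_diamondCrossingProb_of_isFixedPt hm hn hpc hfix⟩
end

section
/- Let m, m', n be real numbers with 2 ≤ m < m' and n ≥ 2. If p ∈ (0,1) satisfies 1 − (1 − p^n)^m = p and p' ∈ (0,1) satisfies 1 − (1 − p'^n)^{m'} = p', then p' < p. That is, the critical probability p_c(m,n) of the diamond fractal D(m,n) is strictly decreasing in the number of branches m. -/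
/-!
At a fixed point, `(1 - p^n)^m = 1 - p`, i.e. `m = log (1 - p) / log (1 - p^n)`, so it suffices
that this ratio is strictly decreasing in `p ∈ (0,1)`. Numerator and denominator vanish at `0`,
and the ratio of their derivatives is `(1 - p^n) / (n p^(n-1) (1 - p)) = (1 - s p) / n`, where
`s p` is the slope of the secant of the strictly convex `t ↦ t^(1-n)` between `p` and `1`.
This slope increases with `p`, and the monotone form of l'Hôpital's rule concludes.
-/

open Set Real

theorem strictConvexOn_rpow_of_neg {q : ℝ} (hq : q < 0) :
    StrictConvexOn ℝ (Ioi 0) fun x : ℝ ↦ x ^ q := by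
  refine StrictMonoOn.strictConvexOn_of_deriv (convex_Ioi 0)
    (fun x hx ↦ (continuousAt_rpow_const x q (.inl hx.ne')).continuousWithinAt) ?_
  rw [deriv_rpow_const', interior_Ioi]
  intro x hx y _ hxy
  exact mul_lt_mul_of_neg_left (rpow_lt_rpow_of_neg hx hxy (by linarith)) hq

theorem exists_mem_Ioo_sub_eq_mul_sub {f g g' r : ℝ → ℝ} {a b : ℝ} (hab : a < b)
    (hf : ContinuousOn f (Icc a b)) (hg : ContinuousOn g (Icc a b))
    (hf' : ∀ x ∈ Ioo a b, HasDerivAt f (r x * g' x) x)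
    (hg' : ∀ x ∈ Ioo a b, HasDerivAt g (g' x) x) (hg'_pos : ∀ x ∈ Ioo a b, 0 < g' x) :
    ∃ c ∈ Ioo a b, f b - f a = r c * (g b - g a) := by
  obtain ⟨c, hc, hcauchy⟩ := exists_ratio_hasDerivAt_eq_ratio_slope f _ hab hf hf' g g' hg hg'
  refine ⟨c, hc, mul_right_cancel₀ (hg'_pos c hc).ne' ?_⟩
  linear_combination -hcauchy

/-- Monotone form of l'Hôpital's rule: `r` plays the role of `f' / g'`. -/
theorem strictAntiOn_div_of_hasDerivAt {f g g' r : ℝ → ℝ} {a b : ℝ}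
    (hf : ContinuousOn f (Ico a b)) (hg : ContinuousOn g (Ico a b)) (hfa : f a = 0)
    (hga : g a = 0) (hf' : ∀ x ∈ Ioo a b, HasDerivAt f (r x * g' x) x)
    (hg' : ∀ x ∈ Ioo a b, HasDerivAt g (g' x) x) (hg'_pos : ∀ x ∈ Ioo a b, 0 < g' x)
    (hr : StrictAntiOn r (Ioo a b)) :
    StrictAntiOn (fun x ↦ f x / g x) (Ioo a b) := by
  have mvt : ∀ x y, a ≤ x → x < y → y < b → ∃ c ∈ Ioo x y, f y - f x = r c * (g y - g x) :=
    fun x y hax hxy hyb ↦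
      have hsub : Ioo x y ⊆ Ioo a b := Ioo_subset_Ioo hax hyb.le
      exists_mem_Ioo_sub_eq_mul_sub hxy (hf.mono (Icc_subset_Ico hax hyb))
        (hg.mono (Icc_subset_Ico hax hyb)) (fun z hz ↦ hf' z (hsub hz))
        (fun z hz ↦ hg' z (hsub hz)) (fun z hz ↦ hg'_pos z (hsub hz))
  have hg_mono : StrictMonoOn g (Ico a b) := by
    refine strictMonoOn_of_hasDerivWithinAt_pos (f' := g') (convex_Ico a b) hg
      (fun x hx ↦ ?_) (fun x hx ↦ ?_) <;> rw [interior_Ico] at hx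
    exacts [(hg' x hx).hasDerivWithinAt, hg'_pos x hx]
  intro x hx y hy hxy
  obtain ⟨c₁, hc₁, hfx⟩ := mvt a x le_rfl hx.1 hx.2
  obtain ⟨c₂, hc₂, hfy⟩ := mvt x y hx.1.le hxy hy.2
  rw [hfa, hga, sub_zero, sub_zero] at hfx
  have hgx : 0 < g x :=
    hga ▸ hg_mono (left_mem_Ico.2 (hx.1.trans hx.2)) (Ioo_subset_Ico_self hx) hx.1
  have hgxy : g x < g y := hg_mono (Ioo_subset_Ico_self hx) (Ioo_subset_Ico_self hy) hxy
  have hr₁₂ : r c₂ < r c₁ :=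
    hr ⟨hc₁.1, hc₁.2.trans hx.2⟩ ⟨hx.1.trans hc₂.1, hc₂.2.trans hy.2⟩ (hc₁.2.trans hc₂.1)
  have hfy_lt : f y < r c₁ * g y :=
    calc f y = r c₁ * g x + r c₂ * (g y - g x) := by linear_combination hfy + hfx
      _ < r c₁ * g x + r c₁ * (g y - g x) := by gcongr
      _ = r c₁ * g y := by ring
  show f y / g y < f x / g x
  rw [div_lt_iff₀ (hgx.trans hgxy), hfx, mul_div_cancel_right₀ _ hgx.ne']
  exact hfy_lt

/-- Equal to `(1 - x^n) / (n x^(n-1) (1 - x))` on `(0,1)`, written through the secant slope of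
`t ↦ t^(1-n)` between `x` and `1`. -/
noncomputable def derivRatio (n x : ℝ) : ℝ := (1 - (x ^ (1 - n) - 1) / (x - 1)) / n

theorem strictAntiOn_derivRatio {n : ℝ} (hn : 1 < n) : StrictAntiOn (derivRatio n) (Ioo 0 1) := by
  intro x hx y hy hxy
  have hsecant := (strictConvexOn_rpow_of_neg (q := 1 - n) (by linarith)).secant_strict_mono
    (mem_Ioi.2 one_pos) (mem_Ioi.2 hx.1) (mem_Ioi.2 hy.1) hx.2.ne hy.2.ne hxy
  rw [one_rpow] at hsecant
  unfold derivRatio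
  gcongr

theorem hasDerivAt_neg_log_one_sub_rpow {n x : ℝ} (hn : 1 < n) (hx : x ∈ Ioo 0 1) :
    HasDerivAt (fun y ↦ -log (1 - y ^ n)) (n * x ^ (n - 1) / (1 - x ^ n)) x := by
  have hxn : x ^ n < 1 := rpow_lt_one hx.1.le hx.2 (by linarith)
  refine (((hasDerivAt_rpow_const (.inr hn.le)).const_sub 1).log
    (by linarith)).neg.congr_deriv ?_
  rw [neg_div, neg_neg]

theorem hasDerivAt_neg_log_one_sub {n x : ℝ} (hn : 1 < n) (hx : x ∈ Ioo 0 1) :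
    HasDerivAt (fun y ↦ -log (1 - y)) (derivRatio n x * (n * x ^ (n - 1) / (1 - x ^ n))) x := by
  have hxn : x ^ n < 1 := rpow_lt_one hx.1.le hx.2 (by linarith)
  have hinv : x ^ (1 - n) * x ^ (n - 1) = 1 := by rw [← rpow_add hx.1]; norm_num
  have hpow : x ^ (n - 1) * x = x ^ n := by rw [← rpow_add_one hx.1.ne']; norm_num
  have hx₁ : 1 - x ≠ 0 := by linarith [hx.2]
  have hx₁' : x - 1 ≠ 0 := by linarith [hx.2]
  have hxn' : 1 - x ^ n ≠ 0 := by linarith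
  have hn₀ : n ≠ 0 := by linarith
  refine (((hasDerivAt_id' x).const_sub 1).log hx₁).neg.congr_deriv ?_
  unfold derivRatio
  field_simp
  linear_combination (1 - x) * hinv - (1 - x) * hpow

theorem strictAntiOn_log_one_sub_div_log_one_sub_rpow {n : ℝ} (hn : 1 < n) :
    StrictAntiOn (fun x : ℝ ↦ log (1 - x) / log (1 - x ^ n)) (Ioo 0 1) := by
  have hxn : ∀ x ∈ Ico (0 : ℝ) 1, x ^ n < 1 := fun x hx ↦ rpow_lt_one hx.1 hx.2 (by linarith)
  have hratio := strictAntiOn_div_of_hasDerivAt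
    (f := fun x ↦ -log (1 - x)) (g := fun x ↦ -log (1 - x ^ n))
    (ContinuousOn.neg <| ContinuousOn.log (by fun_prop) fun x hx ↦ by linarith [hx.2])
    (ContinuousOn.neg <| ContinuousOn.log
      (continuous_const.sub (continuous_rpow_const (by linarith))).continuousOn
      fun x hx ↦ by linarith [hxn x hx])
    (by simp) (by simp [zero_rpow (by positivity : n ≠ 0)])
    (fun x hx ↦ hasDerivAt_neg_log_one_sub hn hx)
    (fun x hx ↦ hasDerivAt_neg_log_one_sub_rpow hn hx)
    (fun x hx ↦ div_pos (by have := hx.1; positivity) (sub_pos.2 (hxn x (Ioo_subset_Ico_self hx))))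
    (strictAntiOn_derivRatio hn)
  simpa only [neg_div_neg_eq] using hratio

theorem log_one_sub_div_log_one_sub_rpow_eq_of_fixed {m n p : ℝ} (hn : 0 < n)
    (hp : p ∈ Ioo 0 1) (hfix : 1 - (1 - p ^ n) ^ m = p) :
    log (1 - p) / log (1 - p ^ n) = m := by
  have hpn_pos : 0 < p ^ n := rpow_pos_of_pos hp.1 n
  have hpn_lt : p ^ n < 1 := rpow_lt_one hp.1.le hp.2 hn
  rw [div_eq_iff (log_neg (by linarith) (by linarith)).ne, ← log_rpow (by linarith),
    show (1 - p ^ n) ^ m = 1 - p by linarith]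

theorem diamond_pc_decreasing_in_branches_general (m m' n : ℝ) (hmm' : m < m')
    (hn : 2 ≤ n) (p p' : ℝ) (hp : p ∈ Set.Ioo (0 : ℝ) 1) (hp' : p' ∈ Set.Ioo (0 : ℝ) 1)
    (hfix : 1 - (1 - p ^ n) ^ m = p) (hfix' : 1 - (1 - p' ^ n) ^ m' = p') :
    p' < p := by
  have hn₁ : 1 < n := by linarith
  rw [← log_one_sub_div_log_one_sub_rpow_eq_of_fixed (by linarith) hp hfix,
    ← log_one_sub_div_log_one_sub_rpow_eq_of_fixed (by linarith) hp' hfix'] at hmm'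
  exact ((strictAntiOn_log_one_sub_div_log_one_sub_rpow hn₁).lt_iff_gt hp hp').1 hmm'

/-- Let `m, m', n` be real numbers with `2 ≤ m < m'` and `n ≥ 2`. If `p ∈ (0,1)` satisfies
`1 − (1 − p^n)^m = p` and `p' ∈ (0,1)` satisfies `1 − (1 − p'^n)^{m'} = p'`, then `p' < p`:
the critical probability of `D(m,n)` is strictly decreasing in the number of branches `m`.
(Here powers are real powers.) -/
theorem diamond_pc_decreasing_in_branches (m m' n : ℝ) (hm : 2 ≤ m) (hmm' : m < m')
    (hn : 2 ≤ n) (p p' : ℝ) (hp : p ∈ Set.Ioo (0 : ℝ) 1) (hp' : p' ∈ Set.Ioo (0 : ℝ) 1)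
    (hfix : 1 - (1 - p ^ n) ^ m = p) (hfix' : 1 - (1 - p' ^ n) ^ m' = p') :
    p' < p :=
  diamond_pc_decreasing_in_branches_general m m' n hmm' hn p p' hp hp' hfix hfix'
end
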